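/- arXiv:2103.16999 — 6 statements merged into one kernel-verified Lean document; each statement's English description precedes it below -/
import Mathlib

section
/- Let A ∈ ℝ^{N×N}, let R_j, P_j, P̃_j be matrices with R_j P_j = I on each local space and Σ_j P̃_j R_j = I, and set A_j := R_j A P_j (assumed invertible). Then the RAS iteration u^n = u^{n-1} + Σ_j P̃_j A_j^{-1} R_j (f − A u^{n-1}) is identical to the iteration u^n = Σ_j P̃_j A_j^{-1} R_j (f − A(I − P_j R_j) u^{n-1}). -/
/-!
Removing the interior part `P_j R_j u` of `u` from the local right-hand side adds
`R_j A P_j (R_j u) = A_j (R_j u)` to it, so the local solve returns the residual correction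
plus `R_j u`. Prolonging with `P̃_j` and summing, the partition of unity `Σ_j P̃_j R_j = I`
turns these extra terms into `u`.
-/

open Matrix

theorem Matrix.mulVec_nonsing_inv_restrict_sub_interior {𝕜 n k : Type*} [CommRing 𝕜]
    [Fintype n] [DecidableEq n] [Fintype k] [DecidableEq k]
    (A : Matrix n n 𝕜) (R : Matrix k n 𝕜) (P Pt : Matrix n k 𝕜) (hA : IsUnit (R * A * P))
    (f u : n → 𝕜) :
    Pt *ᵥ ((R * A * P)⁻¹ *ᵥ (R *ᵥ (f - A *ᵥ ((1 - P * R) *ᵥ u))))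
      = Pt *ᵥ ((R * A * P)⁻¹ *ᵥ (R *ᵥ (f - A *ᵥ u))) + (Pt * R) *ᵥ u := by
  have hsplit : f - A *ᵥ ((1 - P * R) *ᵥ u) = (f - A *ᵥ u) + A *ᵥ ((P * R) *ᵥ u) := by
    rw [sub_mulVec, one_mulVec, mulVec_sub]
    abel
  have hsolve : (R * A * P)⁻¹ *ᵥ (R *ᵥ (A *ᵥ ((P * R) *ᵥ u))) = R *ᵥ u := by
    have hlocal : R *ᵥ (A *ᵥ ((P * R) *ᵥ u)) = (R * A * P) *ᵥ (R *ᵥ u) := by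
      simp only [mulVec_mulVec, Matrix.mul_assoc]
    rw [hlocal, mulVec_mulVec, nonsing_inv_mul _ ((isUnit_iff_isUnit_det _).mp hA), one_mulVec]
  rw [hsplit, mulVec_add, mulVec_add, hsolve, mulVec_add, mulVec_mulVec u Pt R]

theorem ras_two_forms_general {N m : ℕ} {d : Fin m → ℕ}
    (A : Matrix (Fin N) (Fin N) ℝ)
    (R : ∀ j : Fin m, Matrix (Fin (d j)) (Fin N) ℝ)
    (P : ∀ j : Fin m, Matrix (Fin N) (Fin (d j)) ℝ)
    (Pt : ∀ j : Fin m, Matrix (Fin N) (Fin (d j)) ℝ)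
    (f : Fin N → ℝ)
    (hPU : ∑ j, Pt j * R j = 1)
    (hinv : ∀ j, IsUnit (R j * A * P j))
    (u : Fin N → ℝ) :
    u + ∑ j, (Pt j).mulVec ((R j * A * P j)⁻¹.mulVec ((R j).mulVec (f - A.mulVec u)))
      = ∑ j, (Pt j).mulVec ((R j * A * P j)⁻¹.mulVec
          ((R j).mulVec (f - A.mulVec ((1 - P j * R j).mulVec u)))) := by
  simp_rw [fun j => mulVec_nonsing_inv_restrict_sub_interior A (R j) (P j) (Pt j) (hinv j) f u]
  rw [Finset.sum_add_distrib, ← sum_mulVec, hPU, one_mulVec, add_comm]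

/-- RAS iteration in residual-correction form is identical to the
boundary-condition form. -/
theorem ras_two_forms {N m : ℕ} {d : Fin m → ℕ}
    (A : Matrix (Fin N) (Fin N) ℝ)
    (R : ∀ j : Fin m, Matrix (Fin (d j)) (Fin N) ℝ)
    (P : ∀ j : Fin m, Matrix (Fin N) (Fin (d j)) ℝ)
    (Pt : ∀ j : Fin m, Matrix (Fin N) (Fin (d j)) ℝ)
    (f : Fin N → ℝ)
    (hRP : ∀ j, R j * P j = 1)
    (hPU : ∑ j, Pt j * R j = 1)
    (hinv : ∀ j, IsUnit (R j * A * P j))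
    (u : Fin N → ℝ) :
    u + ∑ j, (Pt j).mulVec ((R j * A * P j)⁻¹.mulVec ((R j).mulVec (f - A.mulVec u)))
      = ∑ j, (Pt j).mulVec ((R j * A * P j)⁻¹.mulVec
          ((R j).mulVec (f - A.mulVec ((1 - P j * R j).mulVec u)))) :=
  ras_two_forms_general A R P Pt f hPU hinv u
end

section
/- Let M^{-1} := Σ_j P̃_j A_j^{-1} R_j be the RAS preconditioner and let R̄ : V → V̄, P̄ : V̄ → V satisfy R̄ P̄ = I and R̄ M^{-1} A = R̄ M^{-1} A P̄ R̄. Define G^RAS(u) = u + M^{-1}(f − A u) and G^SRAS(v) = R̄ G^RAS(P̄ v). If u^0 ∈ V, v^0 = R̄ u^0, u^n = G^RAS(u^{n-1}), and v^n = G^SRAS(v^{n-1}), then R̄ u^n = v^n for all n ≥ 1. -/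
/-!
The restriction `R̄` semiconjugates the RAS step to the SRAS step: by `R̄ M⁻¹ A = R̄ M⁻¹ A P̄ R̄`
the restricted correction `R̄ M⁻¹ (f - A u)` only depends on `R̄ u`, and `R̄ P̄ = I` makes
`R̄ (P̄ R̄ u) = R̄ u`.
-/

theorem Function.Semiconj.apply_eq_of_recurrence {α β : Type*} {φ : α → β} {g : α → α}
    {g' : β → β} (h : Function.Semiconj φ g g') {u : ℕ → α} {v : ℕ → β}
    (hu : ∀ n, u (n + 1) = g (u n)) (hv : ∀ n, v (n + 1) = g' (v n)) (h0 : v 0 = φ (u 0)) :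
    ∀ n, φ (u n) = v n
  | 0 => h0.symm
  | n + 1 => by rw [hu, hv, h, h.apply_eq_of_recurrence hu hv h0 n]

namespace Matrix

variable {ι κ R : Type*} [Fintype ι] [Fintype κ] [Ring R]

def rasStep (A Mi : Matrix ι ι R) (f : ι → R) (u : ι → R) : ι → R :=
  u + Mi *ᵥ (f - A *ᵥ u)

def srasStep (A Mi : Matrix ι ι R) (Rb : Matrix κ ι R) (Pb : Matrix ι κ R) (f : ι → R)
    (v : κ → R) : κ → R :=
  Rb *ᵥ rasStep A Mi f (Pb *ᵥ v)

theorem mulVec_mulVec_mulVec_eq_of_compat {A Mi : Matrix ι ι R} {Rb : Matrix κ ι R}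
    {Pb : Matrix ι κ R} (hcompat : Rb * Mi * A = Rb * Mi * A * Pb * Rb) (x : ι → R) :
    Rb *ᵥ (Mi *ᵥ (A *ᵥ x)) = Rb *ᵥ (Mi *ᵥ (A *ᵥ (Pb *ᵥ (Rb *ᵥ x)))) := by
  simp only [mulVec_mulVec, ← Matrix.mul_assoc]
  rw [← hcompat]

theorem semiconj_mulVec_rasStep_srasStep [DecidableEq κ] {A Mi : Matrix ι ι R}
    {Rb : Matrix κ ι R} {Pb : Matrix ι κ R} (hRP : Rb * Pb = 1)
    (hcompat : Rb * Mi * A = Rb * Mi * A * Pb * Rb) (f : ι → R) :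
    Function.Semiconj (Rb *ᵥ ·) (rasStep A Mi f) (srasStep A Mi Rb Pb f) := by
  intro u
  have hRPR : Rb *ᵥ (Pb *ᵥ (Rb *ᵥ u)) = Rb *ᵥ u := by
    rw [mulVec_mulVec, hRP, one_mulVec]
  simp only [srasStep, rasStep, mulVec_add, mulVec_sub, hRPR,
    mulVec_mulVec_mulVec_eq_of_compat hcompat u]

end Matrix

/-- Equivalence between RAS and SRAS iterates on the substructure. -/
theorem ras_sras_equivalence {N Nb : ℕ}
    (A Mi : Matrix (Fin N) (Fin N) ℝ)
    (Rb : Matrix (Fin Nb) (Fin N) ℝ) (Pb : Matrix (Fin N) (Fin Nb) ℝ)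
    (f : Fin N → ℝ)
    (hRP : Rb * Pb = 1)
    (hcompat : Rb * Mi * A = Rb * Mi * A * Pb * Rb)
    (u : ℕ → Fin N → ℝ) (v : ℕ → Fin Nb → ℝ)
    (hv0 : v 0 = Rb.mulVec (u 0))
    (hu : ∀ n, u (n + 1) = u n + Mi.mulVec (f - A.mulVec (u n)))
    (hv : ∀ n, v (n + 1) =
      Rb.mulVec (Pb.mulVec (v n) + Mi.mulVec (f - A.mulVec (Pb.mulVec (v n))))) :
    ∀ n : ℕ, 1 ≤ n → Rb.mulVec (u n) = v n := fun n _ =>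
  (Matrix.semiconj_mulVec_rasStep_srasStep hRP hcompat f).apply_eq_of_recurrence hu hv hv0 n
end

section
/- Assume R̄ P̄ = I and R̄ M^{-1} A = R̄ M^{-1} A P̄ R̄. With u^0 ∈ ℝ^N, v^0 = R̄ u^0, r^0 = M^{-1}(f − A u^0), r̄^0 = R̄ M^{-1}(f − A P̄ v^0), for every k ≥ 1 the affine substructured Krylov space v^0 + span{r̄^0, (R̄ M^{-1} A P̄) r̄^0, …, (R̄ M^{-1} A P̄)^{k-1} r̄^0} equals the image under R̄ of the affine volume Krylov space u^0 + span{r^0, (M^{-1}A) r^0, …, (M^{-1}A)^{k-1} r^0}. -/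
/-!
The restriction `R̄` intertwines the two iteration matrices: the compatibility condition gives
`(R̄ M⁻¹ A P̄) R̄ = R̄ (M⁻¹ A)`, hence `(R̄ M⁻¹ A P̄)ⁱ R̄ = R̄ (M⁻¹ A)ⁱ`. The same condition shows
`r̄⁰ = R̄ r⁰`, so `R̄` maps each Krylov vector `(M⁻¹ A)ⁱ r⁰` to `(R̄ M⁻¹ A P̄)ⁱ r̄⁰`; being linear,
it maps the span and its translate by `u⁰` onto the span and its translate by `v⁰ = R̄ u⁰`.
-/

open Matrix

namespace Matrix

variable {m n R : Type*} [Fintype m] [Fintype n] [DecidableEq m] [DecidableEq n] [CommRing R]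

def krylov (B : Matrix n n R) (r : n → R) (k : ℕ) : Submodule R (n → R) :=
  Submodule.span R (Set.range fun i : Fin k => (B ^ (i : ℕ)) *ᵥ r)

theorem pow_mul_eq_mul_pow_of_mul_eq {B : Matrix m m R} {C : Matrix n n R} {P : Matrix m n R}
    (h : B * P = P * C) (i : ℕ) : B ^ i * P = P * C ^ i := by
  induction i with
  | zero => simp
  | succ i ih =>
    rw [pow_succ, Matrix.mul_assoc, h, ← Matrix.mul_assoc, ih, Matrix.mul_assoc, ← pow_succ]

theorem map_krylov_of_mul_eq {B : Matrix m m R} {C : Matrix n n R} {P : Matrix m n R}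
    (h : B * P = P * C) (r : n → R) (k : ℕ) :
    (krylov C r k).map P.mulVecLin = krylov B (P *ᵥ r) k := by
  rw [krylov, krylov, Submodule.map_span, ← Set.range_comp]
  congr 2
  funext i
  simp only [Function.comp_apply, mulVecLin_apply, mulVec_mulVec, pow_mul_eq_mul_pow_of_mul_eq h]

end Matrix

theorem Set.image_image_add_left {F M M' : Type*} [Add M] [Add M'] [FunLike F M M']
    [AddHomClass F M M'] (L : F) (u : M) (S : Set M) :
    L '' ((u + ·) '' S) = (L u + ·) '' (L '' S) := by
  simp only [Set.image_image, map_add]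

section Restriction

variable {m n R : Type*} [Fintype m] [Fintype n] [CommRing R] {A Mi : Matrix n n R}
  {Rb : Matrix m n R} {Pb : Matrix n m R}

theorem restriction_intertwines (hcompat : Rb * Mi * A = Rb * Mi * A * Pb * Rb) :
    Rb * Mi * A * Pb * Rb = Rb * (Mi * A) := by
  rw [← Matrix.mul_assoc, ← hcompat]

theorem restriction_mulVec_residual (hcompat : Rb * Mi * A = Rb * Mi * A * Pb * Rb)
    (f u : n → R) :
    Rb *ᵥ (Mi *ᵥ (f - A *ᵥ (Pb *ᵥ (Rb *ᵥ u)))) = Rb *ᵥ (Mi *ᵥ (f - A *ᵥ u)) := by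
  simp only [mulVec_sub, mulVec_mulVec, ← Matrix.mul_assoc, ← hcompat]

end Restriction

theorem krylov_space_restriction_general {N Nb : ℕ}
    (A Mi : Matrix (Fin N) (Fin N) ℝ)
    (Rb : Matrix (Fin Nb) (Fin N) ℝ) (Pb : Matrix (Fin N) (Fin Nb) ℝ)
    (f u0 : Fin N → ℝ) (v0 : Fin Nb → ℝ) (r0 : Fin N → ℝ) (rb0 : Fin Nb → ℝ)
    (hcompat : Rb * Mi * A = Rb * Mi * A * Pb * Rb)
    (hv0 : v0 = Rb.mulVec u0)
    (hr0 : r0 = Mi.mulVec (f - A.mulVec u0))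
    (hrb0 : rb0 = Rb.mulVec (Mi.mulVec (f - A.mulVec (Pb.mulVec v0)))) :
    ∀ k : ℕ, 1 ≤ k →
      (fun w => v0 + w) '' ((Submodule.span ℝ
          (Set.range fun i : Fin k => ((Rb * Mi * A * Pb) ^ (i : ℕ)).mulVec rb0) :
            Submodule ℝ (Fin Nb → ℝ)) : Set (Fin Nb → ℝ))
        = Rb.mulVec '' ((fun w => u0 + w) '' ((Submodule.span ℝ
            (Set.range fun i : Fin k => ((Mi * A) ^ (i : ℕ)).mulVec r0) :
              Submodule ℝ (Fin N → ℝ)) : Set (Fin N → ℝ))) := by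
  intro k _
  have hrb : rb0 = Rb *ᵥ r0 := by
    rw [hrb0, hv0, hr0, restriction_mulVec_residual hcompat]
  have hspan : krylov (Rb * Mi * A * Pb) rb0 k = (krylov (Mi * A) r0 k).map Rb.mulVecLin := by
    rw [hrb, map_krylov_of_mul_eq (restriction_intertwines hcompat)]
  change (v0 + ·) '' (krylov (Rb * Mi * A * Pb) rb0 k : Set (Fin Nb → ℝ))
    = Rb.mulVecLin '' ((u0 + ·) '' (krylov (Mi * A) r0 k : Set (Fin N → ℝ)))
  rw [Set.image_image_add_left, hspan, Submodule.map_coe, mulVecLin_apply, hv0]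

/-- The affine substructured Krylov space equals the image under `R̄` of the
affine volume Krylov space. -/
theorem krylov_space_restriction {N Nb : ℕ}
    (A Mi : Matrix (Fin N) (Fin N) ℝ)
    (Rb : Matrix (Fin Nb) (Fin N) ℝ) (Pb : Matrix (Fin N) (Fin Nb) ℝ)
    (f u0 : Fin N → ℝ) (v0 : Fin Nb → ℝ) (r0 : Fin N → ℝ) (rb0 : Fin Nb → ℝ)
    (hRP : Rb * Pb = 1)
    (hcompat : Rb * Mi * A = Rb * Mi * A * Pb * Rb)
    (hv0 : v0 = Rb.mulVec u0)
    (hr0 : r0 = Mi.mulVec (f - A.mulVec u0))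
    (hrb0 : rb0 = Rb.mulVec (Mi.mulVec (f - A.mulVec (Pb.mulVec v0)))) :
    ∀ k : ℕ, 1 ≤ k →
      (fun w => v0 + w) '' ((Submodule.span ℝ
          (Set.range fun i : Fin k => ((Rb * Mi * A * Pb) ^ (i : ℕ)).mulVec rb0) :
            Submodule ℝ (Fin Nb → ℝ)) : Set (Fin Nb → ℝ))
        = Rb.mulVec '' ((fun w => u0 + w) '' ((Submodule.span ℝ
            (Set.range fun i : Fin k => ((Mi * A) ^ (i : ℕ)).mulVec r0) :
              Submodule ℝ (Fin N → ℝ)) : Set (Fin N → ℝ))) :=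
  krylov_space_restriction_general A Mi Rb Pb f u0 v0 r0 rb0 hcompat hv0 hr0 hrb0
end

section
/- Let F : ℝ^N → ℝ^N be differentiable with invertible Jacobians, and R̄, P̄ linear with R̄ P̄ = I. Assume R̄ F(u) = R̄ F(P̄ R̄ u) for all u, and that J_F(u) and J_{F̄}(R̄ u) are invertible where F̄(v) := R̄ F(P̄ v). Then R̄ (J_F(u))^{-1} = (J_{F̄}(R̄ u))^{-1} R̄ for every u. -/
/-!
Differentiating `R̄ ∘ F = F̄ ∘ R̄` at `u` by the chain rule and using uniqueness of derivatives
gives the intertwining relation `R̄ J_F(u) = J_F̄(R̄ u) R̄`; multiplying it by `J_F̄(R̄ u)⁻¹` on the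
left and by `J_F(u)⁻¹` on the right yields the claim.
-/

open Matrix

section Intertwining

variable {𝕜 E F G H : Type*} [NontriviallyNormedField 𝕜]
  [NormedAddCommGroup E] [NormedSpace 𝕜 E] [NormedAddCommGroup F] [NormedSpace 𝕜 F]
  [NormedAddCommGroup G] [NormedSpace 𝕜 G] [NormedAddCommGroup H] [NormedSpace 𝕜 H]

theorem HasFDerivAt.clm_comp_eq_comp_clm {f : E → F} {g : G → H} {f' : E →L[𝕜] F}
    {g' : G →L[𝕜] H} {x : E} (R : F →L[𝕜] H) (S : E →L[𝕜] G)
    (hfg : ∀ y, R (f y) = g (S y)) (hf : HasFDerivAt f f' x) (hg : HasFDerivAt g g' (S x)) :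
    R.comp f' = g'.comp S := by
  have hRf : HasFDerivAt (fun y => R (f y)) (R.comp f') x := R.hasFDerivAt.comp x hf
  have hgS : HasFDerivAt (fun y => R (f y)) (g'.comp S) x := by
    rw [show (fun y => R (f y)) = g ∘ S from funext hfg]
    exact hg.comp x S.hasFDerivAt
  exact hRf.unique hgS

end Intertwining

namespace Matrix

variable {𝕜 l m n : Type*} [NontriviallyNormedField 𝕜] [CompleteSpace 𝕜]

theorem toContinuousLinearMap_mulVecLin_mul [Fintype m] [Fintype n] (A : Matrix l m 𝕜)
    (B : Matrix m n 𝕜) :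
    LinearMap.toContinuousLinearMap (mulVecLin (A * B)) =
      (LinearMap.toContinuousLinearMap (mulVecLin A)).comp
        (LinearMap.toContinuousLinearMap (mulVecLin B)) := by
  ext1 x
  simp [mulVec_mulVec]

theorem toContinuousLinearMap_mulVecLin_injective [Fintype n] [DecidableEq n] :
    Function.Injective fun A : Matrix m n 𝕜 => LinearMap.toContinuousLinearMap (mulVecLin A) := by
  intro A B h
  exact toLin'.injective (LinearMap.toContinuousLinearMap.injective h)

theorem mul_inv_eq_inv_mul_of_mul_eq_mul {K : Type*} [CommRing K] [Fintype m] [DecidableEq m]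
    [Fintype n] [DecidableEq n]
    {A : Matrix m m K} {B : Matrix n n K} {R : Matrix n m K} (h : R * A = B * R)
    (hA : IsUnit A) (hB : IsUnit B) : R * A⁻¹ = B⁻¹ * R := by
  have hA' := (isUnit_iff_isUnit_det A).mp hA
  have hB' := (isUnit_iff_isUnit_det B).mp hB
  calc R * A⁻¹ = B⁻¹ * (B * R) * A⁻¹ := by
        rw [← Matrix.mul_assoc, nonsing_inv_mul B hB', Matrix.one_mul]
    _ = B⁻¹ * (R * A) * A⁻¹ := by rw [h]
    _ = B⁻¹ * R := by
        rw [Matrix.mul_assoc, Matrix.mul_assoc, mul_nonsing_inv A hA', Matrix.mul_one]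

end Matrix

theorem inverse_jacobian_restriction_general {N Nb : ℕ}
    (F : (Fin N → ℝ) → (Fin N → ℝ))
    (JF : (Fin N → ℝ) → Matrix (Fin N) (Fin N) ℝ)
    (JFb : (Fin Nb → ℝ) → Matrix (Fin Nb) (Fin Nb) ℝ)
    (Rb : Matrix (Fin Nb) (Fin N) ℝ) (Pb : Matrix (Fin N) (Fin Nb) ℝ)
    (hJF : ∀ u, HasFDerivAt F (LinearMap.toContinuousLinearMap
      (Matrix.mulVecLin (JF u))) u)
    (hJFb : ∀ v, HasFDerivAt (fun w => Rb.mulVec (F (Pb.mulVec w)))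
      (LinearMap.toContinuousLinearMap (Matrix.mulVecLin (JFb v))) v)
    (hcompat : ∀ u, Rb.mulVec (F u) = Rb.mulVec (F (Pb.mulVec (Rb.mulVec u))))
    (hinvF : ∀ u, IsUnit (JF u))
    (hinvFb : ∀ u, IsUnit (JFb (Rb.mulVec u))) :
    ∀ u, Rb * (JF u)⁻¹ = (JFb (Rb.mulVec u))⁻¹ * Rb := by
  intro u
  set R := LinearMap.toContinuousLinearMap (mulVecLin Rb)
  have hderiv := (hJF u).clm_comp_eq_comp_clm R R hcompat (hJFb (Rb *ᵥ u))
  have hjac : Rb * JF u = JFb (Rb *ᵥ u) * Rb := by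
    apply toContinuousLinearMap_mulVecLin_injective
    simpa only [toContinuousLinearMap_mulVecLin_mul] using hderiv
  exact mul_inv_eq_inv_mul_of_mul_eq_mul hjac (hinvF u) (hinvFb u)

/-- Restriction commutes with inverse Jacobians:
`R̄ (J_F(u))⁻¹ = (J_F̄(R̄ u))⁻¹ R̄`. -/
theorem inverse_jacobian_restriction {N Nb : ℕ}
    (F : (Fin N → ℝ) → (Fin N → ℝ))
    (JF : (Fin N → ℝ) → Matrix (Fin N) (Fin N) ℝ)
    (JFb : (Fin Nb → ℝ) → Matrix (Fin Nb) (Fin Nb) ℝ)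
    (Rb : Matrix (Fin Nb) (Fin N) ℝ) (Pb : Matrix (Fin N) (Fin Nb) ℝ)
    (hRP : Rb * Pb = 1)
    (hJF : ∀ u, HasFDerivAt F (LinearMap.toContinuousLinearMap
      (Matrix.mulVecLin (JF u))) u)
    (hJFb : ∀ v, HasFDerivAt (fun w => Rb.mulVec (F (Pb.mulVec w)))
      (LinearMap.toContinuousLinearMap (Matrix.mulVecLin (JFb v))) v)
    (hcompat : ∀ u, Rb.mulVec (F u) = Rb.mulVec (F (Pb.mulVec (Rb.mulVec u))))
    (hinvF : ∀ u, IsUnit (JF u))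
    (hinvFb : ∀ u, IsUnit (JFb (Rb.mulVec u))) :
    ∀ u, Rb * (JF u)⁻¹ = (JFb (Rb.mulVec u))⁻¹ * Rb :=
  inverse_jacobian_restriction_general F JF JFb Rb Pb hJF hJFb hcompat hinvF hinvFb
end

section
/- Let F : ℝ^N → ℝ^N be differentiable, R̄, P̄ linear with R̄ P̄ = I, and assume R̄ F(u) = F̄(R̄ u) for all u where F̄(v) = R̄ F(P̄ v), with all relevant Jacobians invertible. If u^0 ∈ ℝ^N, v^0 = R̄ u^0, and the Newton sequences are u^n = u^{n-1} − (J_F(u^{n-1}))^{-1} F(u^{n-1}) and v^n = v^{n-1} − (J_{F̄}(v^{n-1}))^{-1} F̄(v^{n-1}), then R̄ u^n = v^n for every n ≥ 1 (equivalence of RASPEN and SRASPEN iterates on the substructure). -/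
/-!
Differentiating the compatibility relation `R̄ ∘ F = F̄ ∘ R̄` at `u` gives the intertwining
`R̄ J_F(u) = J_{F̄}(R̄ u) R̄`, hence `R̄ J_F(u)⁻¹ = J_{F̄}(R̄ u)⁻¹ R̄`. So `R̄` maps a Newton step
for `F` from `u` to a Newton step for `F̄` from `R̄ u`.
-/

open Matrix

theorem HasFDerivAt.comp_eq_comp_of_semiconj {𝕜 E E' F F' : Type*} [NontriviallyNormedField 𝕜]
    [NormedAddCommGroup E] [NormedSpace 𝕜 E] [NormedAddCommGroup E'] [NormedSpace 𝕜 E']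
    [NormedAddCommGroup F] [NormedSpace 𝕜 F] [NormedAddCommGroup F'] [NormedSpace 𝕜 F']
    {f : E → F} {g : E' → F'} {f' : E →L[𝕜] F} {g' : E' →L[𝕜] F'} {x : E}
    (R : E →L[𝕜] E') (S : F →L[𝕜] F') (hfg : ∀ x, S (f x) = g (R x))
    (hf : HasFDerivAt f f' x) (hg : HasFDerivAt g g' (R x)) :
    S.comp f' = g'.comp R := by
  have hSf : HasFDerivAt (g ∘ R) (S.comp f') x := by
    rw [show g ∘ R = S ∘ f from funext fun x => (hfg x).symm]
    exact S.hasFDerivAt.comp x hf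
  exact hSf.unique (hg.comp x R.hasFDerivAt)

theorem Matrix.mul_eq_mul_of_hasFDerivAt_semiconj {𝕜 m n p q : Type*}
    [NontriviallyNormedField 𝕜] [CompleteSpace 𝕜] [Fintype m] [Fintype n] [Fintype p] [Fintype q]
    {f : (n → 𝕜) → p → 𝕜} {g : (m → 𝕜) → q → 𝕜} {x : n → 𝕜}
    (R : Matrix m n 𝕜) (S : Matrix q p 𝕜) (J : Matrix p n 𝕜) (K : Matrix q m 𝕜)
    (hfg : ∀ x, S *ᵥ f x = g (R *ᵥ x))
    (hf : HasFDerivAt f (LinearMap.toContinuousLinearMap J.mulVecLin) x)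
    (hg : HasFDerivAt g (LinearMap.toContinuousLinearMap K.mulVecLin) (R *ᵥ x)) :
    S * J = K * R := by
  have h := HasFDerivAt.comp_eq_comp_of_semiconj (LinearMap.toContinuousLinearMap R.mulVecLin)
    (LinearMap.toContinuousLinearMap S.mulVecLin) hfg hf hg
  refine ext_iff_mulVec.mpr fun y => ?_
  simpa only [ContinuousLinearMap.comp_apply, LinearMap.coe_toContinuousLinearMap', mulVecLin_apply,
    ← mulVec_mulVec] using congrArg (· y) h

theorem Matrix.mul_inv_eq_inv_mul_of_mul_eq_mul_s11 {α m n : Type*} [CommRing α]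
    [Fintype m] [DecidableEq m] [Fintype n] [DecidableEq n]
    {R : Matrix m n α} {A : Matrix n n α} {B : Matrix m m α}
    (hA : IsUnit A) (hB : IsUnit B) (h : R * A = B * R) : R * A⁻¹ = B⁻¹ * R := by
  have hA' := (isUnit_iff_isUnit_det A).mp hA
  have hB' := (isUnit_iff_isUnit_det B).mp hB
  calc R * A⁻¹ = B⁻¹ * (B * R) * A⁻¹ := by
        rw [← Matrix.mul_assoc, nonsing_inv_mul B hB', Matrix.one_mul]
    _ = B⁻¹ * R := by
        rw [← h, Matrix.mul_assoc, Matrix.mul_assoc, mul_nonsing_inv A hA', Matrix.mul_one]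

theorem Matrix.mulVec_sub_inv_mulVec {α m n : Type*} [CommRing α]
    [Fintype m] [DecidableEq m] [Fintype n] [DecidableEq n]
    {R : Matrix m n α} {A : Matrix n n α} {B : Matrix m m α}
    (hA : IsUnit A) (hB : IsUnit B) (h : R * A = B * R) (x y : n → α) :
    R *ᵥ (x - A⁻¹ *ᵥ y) = R *ᵥ x - B⁻¹ *ᵥ (R *ᵥ y) := by
  rw [mulVec_sub, mulVec_mulVec, mul_inv_eq_inv_mul_of_mul_eq_mul_s11 hA hB h, ← mulVec_mulVec]

theorem raspen_sraspen_equivalence_general {N Nb : ℕ}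
    (F : (Fin N → ℝ) → (Fin N → ℝ))
    (JF : (Fin N → ℝ) → Matrix (Fin N) (Fin N) ℝ)
    (JFb : (Fin Nb → ℝ) → Matrix (Fin Nb) (Fin Nb) ℝ)
    (Rb : Matrix (Fin Nb) (Fin N) ℝ) (Pb : Matrix (Fin N) (Fin Nb) ℝ)
    (hJF : ∀ u, HasFDerivAt F (LinearMap.toContinuousLinearMap
      (Matrix.mulVecLin (JF u))) u)
    (hJFb : ∀ v, HasFDerivAt (fun w => Rb.mulVec (F (Pb.mulVec w)))
      (LinearMap.toContinuousLinearMap (Matrix.mulVecLin (JFb v))) v)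
    (hcompat : ∀ u, Rb.mulVec (F u) = Rb.mulVec (F (Pb.mulVec (Rb.mulVec u))))
    (u : ℕ → Fin N → ℝ) (v : ℕ → Fin Nb → ℝ)
    (hv0 : v 0 = Rb.mulVec (u 0))
    (hinvF : ∀ n, IsUnit (JF (u n)))
    (hinvFb : ∀ n, IsUnit (JFb (v n)))
    (hu : ∀ n, u (n + 1) = u n - (JF (u n))⁻¹.mulVec (F (u n)))
    (hv : ∀ n, v (n + 1) = v n - (JFb (v n))⁻¹.mulVec
      (Rb.mulVec (F (Pb.mulVec (v n))))) :
    ∀ n : ℕ, 1 ≤ n → Rb.mulVec (u n) = v n := by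
  suffices h : ∀ n, Rb *ᵥ u n = v n from fun n _ => h n
  intro n
  induction n with
  | zero => exact hv0.symm
  | succ n ih =>
    have hJ : Rb * JF (u n) = JFb (v n) * Rb := by
      rw [← ih]
      exact mul_eq_mul_of_hasFDerivAt_semiconj Rb Rb _ _ hcompat (hJF (u n)) (hJFb _)
    rw [hu, hv, mulVec_sub_inv_mulVec (hinvF n) (hinvFb n) hJ, ih, hcompat, ih]

/-- Equivalence of RASPEN and SRASPEN Newton iterates on the substructure. -/
theorem raspen_sraspen_equivalence {N Nb : ℕ}
    (F : (Fin N → ℝ) → (Fin N → ℝ))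
    (JF : (Fin N → ℝ) → Matrix (Fin N) (Fin N) ℝ)
    (JFb : (Fin Nb → ℝ) → Matrix (Fin Nb) (Fin Nb) ℝ)
    (Rb : Matrix (Fin Nb) (Fin N) ℝ) (Pb : Matrix (Fin N) (Fin Nb) ℝ)
    (hRP : Rb * Pb = 1)
    (hJF : ∀ u, HasFDerivAt F (LinearMap.toContinuousLinearMap
      (Matrix.mulVecLin (JF u))) u)
    (hJFb : ∀ v, HasFDerivAt (fun w => Rb.mulVec (F (Pb.mulVec w)))
      (LinearMap.toContinuousLinearMap (Matrix.mulVecLin (JFb v))) v)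
    (hcompat : ∀ u, Rb.mulVec (F u) = Rb.mulVec (F (Pb.mulVec (Rb.mulVec u))))
    (u : ℕ → Fin N → ℝ) (v : ℕ → Fin Nb → ℝ)
    (hv0 : v 0 = Rb.mulVec (u 0))
    (hinvF : ∀ n, IsUnit (JF (u n)))
    (hinvFb : ∀ n, IsUnit (JFb (v n)))
    (hu : ∀ n, u (n + 1) = u n - (JF (u n))⁻¹.mulVec (F (u n)))
    (hv : ∀ n, v (n + 1) = v n - (JFb (v n))⁻¹.mulVec
      (Rb.mulVec (F (Pb.mulVec (v n))))) :
    ∀ n : ℕ, 1 ≤ n → Rb.mulVec (u n) = v n :=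
  raspen_sraspen_equivalence_general F JF JFb Rb Pb hJF hJFb hcompat u v hv0 hinvF hinvFb hu hv
end

section
/- Let G_j be the implicit solution operators of nonlinear RAS for a differentiable F, i.e., R_j F(P_j G_j(u) + (I − P_j R_j) u) = 0, and suppose each G_j is differentiable with R_j J(u^{(j)}) P_j invertible, where u^{(j)} := P_j G_j(u) + (I − P_j R_j) u and J = J_F. Then dG_j/du (u) = R_j − (R_j J(u^{(j)}) P_j)^{-1} R_j J(u^{(j)}). -/
/-!
Since `u ↦ R F(P G(u) + (I - P R) u)` vanishes identically, the chain rule gives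
`R J(u⁽ʲ⁾) (P G'(u) + I - P R) = 0`, i.e. `(R J P) G'(u) = (R J P) R - R J`;
multiplying by `(R J P)⁻¹` yields the formula.
-/

open Matrix Filter Topology

theorem HasFDerivAt.comp_eq_zero_of_eventually_const {𝕜 : Type*} [NontriviallyNormedField 𝕜]
    {E F G : Type*} [NormedAddCommGroup E] [NormedSpace 𝕜 E] [NormedAddCommGroup F]
    [NormedSpace 𝕜 F] [NormedAddCommGroup G] [NormedSpace 𝕜 G]
    {f : F → G} {g : E → F} {f' : F →L[𝕜] G} {g' : E →L[𝕜] F} {x : E}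
    (hf : HasFDerivAt f f' (g x)) (hg : HasFDerivAt g g' x)
    (hc : ∀ᶠ y in 𝓝 x, f (g y) = f (g x)) : f'.comp g' = 0 :=
  (hf.comp x hg).unique ((hasFDerivAt_const _ x).congr_of_eventuallyEq hc)

theorem Matrix.eq_sub_inv_mul_of_mul_add_eq_zero {m n α : Type*} [Fintype m] [Fintype n]
    [DecidableEq m] [DecidableEq n] [CommRing α]
    {A : Matrix m n α} {P : Matrix n m α} {R D : Matrix m n α}
    (hAP : IsUnit (A * P)) (h : A * (P * D + (1 - P * R)) = 0) : D = R - (A * P)⁻¹ * A := by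
  have hsolve : A * P * D = A * P * R - A := by
    rw [← sub_eq_zero, ← h]
    simp only [Matrix.mul_add, Matrix.mul_sub, Matrix.mul_one, Matrix.mul_assoc]
    abel
  have hdet := (Matrix.isUnit_iff_isUnit_det _).mp hAP
  rw [← Matrix.nonsing_inv_mul_cancel_left _ D hdet, hsolve, Matrix.mul_sub,
    ← Matrix.mul_assoc, Matrix.nonsing_inv_mul _ hdet, Matrix.one_mul]

section MatrixDerivative

variable {𝕜 : Type*} [NontriviallyNormedField 𝕜] [CompleteSpace 𝕜]
  {l m n : Type*} [Fintype n]

theorem Matrix.toContinuousLinearMap_mulVecLin_eq_zero_iff [DecidableEq n] (A : Matrix m n 𝕜) :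
    LinearMap.toContinuousLinearMap (mulVecLin A) = 0 ↔ A = 0 := by
  rw [map_eq_zero_iff _ LinearMap.toContinuousLinearMap.injective]
  exact map_eq_zero_iff Matrix.toLin' Matrix.toLin'.injective

variable [Fintype m]

theorem Matrix.toContinuousLinearMap_mulVecLin_mul_s15 (A : Matrix l m 𝕜) (B : Matrix m n 𝕜) :
    LinearMap.toContinuousLinearMap (mulVecLin (A * B)) =
      (LinearMap.toContinuousLinearMap (mulVecLin A)).comp
        (LinearMap.toContinuousLinearMap (mulVecLin B)) := by
  ext
  simp [Matrix.mulVecLin_mul]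

variable [Fintype l]

theorem HasFDerivAt.matrix_mulVec (A : Matrix l m 𝕜) {f : (n → 𝕜) → m → 𝕜} {D : Matrix m n 𝕜}
    {x : n → 𝕜} (hf : HasFDerivAt f (LinearMap.toContinuousLinearMap (mulVecLin D)) x) :
    HasFDerivAt (fun y => A *ᵥ f y) (LinearMap.toContinuousLinearMap (mulVecLin (A * D))) x := by
  rw [Matrix.toContinuousLinearMap_mulVecLin_mul_s15]
  exact (LinearMap.toContinuousLinearMap (mulVecLin A)).hasFDerivAt (x := f x) |>.comp x hf

theorem HasFDerivAt.matrix_mulVec_add_mulVec (P : Matrix l m 𝕜) (M : Matrix l n 𝕜)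
    {g : (n → 𝕜) → m → 𝕜} {D : Matrix m n 𝕜} {x : n → 𝕜}
    (hg : HasFDerivAt g (LinearMap.toContinuousLinearMap (mulVecLin D)) x) :
    HasFDerivAt (fun y => P *ᵥ g y + M *ᵥ y)
      (LinearMap.toContinuousLinearMap (mulVecLin (P * D + M))) x := by
  rw [Matrix.mulVecLin_add, map_add]
  exact (hg.matrix_mulVec P).add
    ((LinearMap.toContinuousLinearMap (mulVecLin M)).hasFDerivAt (x := x))

end MatrixDerivative

theorem local_solution_operator_derivative_general {N Nj : ℕ}
    (F : (Fin N → ℝ) → (Fin N → ℝ))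
    (J : (Fin N → ℝ) → Matrix (Fin N) (Fin N) ℝ)
    (R : Matrix (Fin Nj) (Fin N) ℝ) (P : Matrix (Fin N) (Fin Nj) ℝ)
    (G : (Fin N → ℝ) → (Fin Nj → ℝ))
    (dG : (Fin N → ℝ) → Matrix (Fin Nj) (Fin N) ℝ)
    (hF : ∀ x, HasFDerivAt F (LinearMap.toContinuousLinearMap
      (Matrix.mulVecLin (J x))) x)
    (hG : ∀ u, HasFDerivAt G (LinearMap.toContinuousLinearMap
      (Matrix.mulVecLin (dG u))) u)
    (himp : ∀ u, R.mulVec (F (P.mulVec (G u) + (1 - P * R).mulVec u)) = 0)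
    (u : Fin N → ℝ)
    (hinv : IsUnit (R * J (P.mulVec (G u) + (1 - P * R).mulVec u) * P)) :
    dG u = R - (R * J (P.mulVec (G u) + (1 - P * R).mulVec u) * P)⁻¹
      * (R * J (P.mulVec (G u) + (1 - P * R).mulVec u)) := by
  have hchain := ((hF _).matrix_mulVec R).comp_eq_zero_of_eventually_const
    ((hG u).matrix_mulVec_add_mulVec P (1 - P * R))
    (Eventually.of_forall fun v => (himp v).trans (himp u).symm)
  rw [← Matrix.toContinuousLinearMap_mulVecLin_mul_s15,
    Matrix.toContinuousLinearMap_mulVecLin_eq_zero_iff] at hchain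
  exact Matrix.eq_sub_inv_mul_of_mul_add_eq_zero hinv hchain

/-- Implicit differentiation of the local solution operator:
`dG_j/du(u) = R_j − (R_j J(u⁽ʲ⁾) P_j)⁻¹ R_j J(u⁽ʲ⁾)`. -/
theorem local_solution_operator_derivative {N Nj : ℕ}
    (F : (Fin N → ℝ) → (Fin N → ℝ))
    (J : (Fin N → ℝ) → Matrix (Fin N) (Fin N) ℝ)
    (R : Matrix (Fin Nj) (Fin N) ℝ) (P : Matrix (Fin N) (Fin Nj) ℝ)
    (G : (Fin N → ℝ) → (Fin Nj → ℝ))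
    (dG : (Fin N → ℝ) → Matrix (Fin Nj) (Fin N) ℝ)
    (hRP : R * P = 1)
    (hF : ∀ x, HasFDerivAt F (LinearMap.toContinuousLinearMap
      (Matrix.mulVecLin (J x))) x)
    (hG : ∀ u, HasFDerivAt G (LinearMap.toContinuousLinearMap
      (Matrix.mulVecLin (dG u))) u)
    (himp : ∀ u, R.mulVec (F (P.mulVec (G u) + (1 - P * R).mulVec u)) = 0)
    (u : Fin N → ℝ)
    (hinv : IsUnit (R * J (P.mulVec (G u) + (1 - P * R).mulVec u) * P)) :
    dG u = R - (R * J (P.mulVec (G u) + (1 - P * R).mulVec u) * P)⁻¹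
      * (R * J (P.mulVec (G u) + (1 - P * R).mulVec u)) :=
  local_solution_operator_derivative_general F J R P G dG hF hG himp u hinv
end
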